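/- Let k be a commutative ring, and let C be a small category with finite products in which the terminal object ∗ is a zero (null) object. Let F : C ⥤ Mod_k be a symmetric monoidal functor with respect to the cartesian monoidal structure on C and the tensor product on Mod_k, with structure isomorphisms μ_{X,Y} : F(X) ⊗ F(Y) ≅ F(X × Y) and F(∗) ≅ k. Fix X ∈ C and n ∈ ℕ. For 1 ≤ m ≤ n+1 let τ_m : X^{×(n+1)} → X^{×(n+1)} be id^{×(m−1)} × p_X × id^{×(n+1−m)} where p_X := η_X ∘ ε_X, set e_m := id − F(τ_m) ∈ End_k(F(X^{×(n+1)})), and χ := e_1 ∘ e_2 ∘ ⋯ ∘ e_{n+1}. Let F̃(X) be the coaugmented coalgebra with underlying module F(X), comultiplication μ_{X,X}^{−1} ∘ F(Δ_X) (Δ_X : X → X × X the diagonal), counit induced by F(ε_X) and F(∗) ≅ k, and coaugmentation induced by F(η_X). Then ker(χ ∘ F(Δ^{(n+1)}_X) : F(X) → F(X^{×(n+1)})) = P_n(F̃(X)), i.e. the n-th polynomial approximation of F evaluated at X coincides with the n-th coradical filtration of F̃(X). -/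

import Mathlib

/-!
The structure maps of `F` assemble into isomorphisms `Φₙ : F(X)^{⊗n} ≅ F(X^{×n})`. By naturality
of `μ`, each `e_m = id − F(τ_m)` is transported by `Φₙ` to `id − F(p_X)` acting on the `m`-th
tensor factor only, so `χ ∘ Φₙ = Φₙ ∘ (id − F(p_X))^{⊗n}`; by associativity of `μ`, the iterated
comultiplication of `F̃(X)` is transported to `F(Δ^{(n)}_X)`. Since `id − F(p_X)` is exactly
`e_{F̃(X)}`, this gives `χ ∘ F(Δ^{(n+1)}_X) = Φ_{n+1} ∘ δ^{n+1}`, and `Φ_{n+1}` is injective.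
-/

open TensorProduct

noncomputable section

universe u

variable (R : Type u) [CommRing R]

/-- `Tpow R H n` is the `n`-th tensor power `H^{⊗n}` of the `R`-module `H`,
defined recursively by `H^{⊗0} = R` and `H^{⊗(n+1)} = H ⊗ H^{⊗n}`. -/
def Tpow (H : Type u) [AddCommGroup H] [Module R H] : ℕ → ModuleCat.{u} R
  | 0 => ModuleCat.of R R
  | n + 1 => ModuleCat.of R (H ⊗[R] (Tpow H n))

variable {R}
variable {H : Type u} [AddCommGroup H] [Module R H]

/-- The iterated comultiplication `Δ^{(n)} : H → H^{⊗n}`: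
`Δ^{(0)} = ε`, `Δ^{(1)} = id` (as the canonical map `H ≅ H ⊗ R`), and
`Δ^{(n+1)} = (Δ ⊗ id^{⊗(n−1)}) ∘ Δ^{(n)}`. -/
def iterComul (Δc : H →ₗ[R] H ⊗[R] H) (εc : H →ₗ[R] R) : (n : ℕ) → (H →ₗ[R] Tpow R H n)
  | 0 => εc
  | 1 => (TensorProduct.rid R H).symm.toLinearMap
  | n + 2 =>
      (TensorProduct.assoc R H H (Tpow R H n)).toLinearMap
        ∘ₗ (LinearMap.rTensor (Tpow R H n) Δc)
        ∘ₗ (iterComul Δc εc (n + 1))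

/-- The `n`-fold tensor power `e^{⊗n} : H^{⊗n} → H^{⊗n}` of a linear endomorphism `e`. -/
def mapPow (e : H →ₗ[R] H) : (n : ℕ) → (Tpow R H n →ₗ[R] Tpow R H n)
  | 0 => LinearMap.id
  | n + 1 => TensorProduct.map e (mapPow e n)

/-- `e_H := id − η ∘ ε`, where `η : R → H` is the coaugmentation `r ↦ r • u` sending `1` to `u`. -/
def eAug (εc : H →ₗ[R] R) (u : H) : H →ₗ[R] H :=
  LinearMap.id - (LinearMap.toSpanSingleton R H u) ∘ₗ εc

/-- `δ^n := e_H^{⊗n} ∘ Δ^{(n)} : H → H^{⊗n}`. -/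
def deltaPow (Δc : H →ₗ[R] H ⊗[R] H) (εc : H →ₗ[R] R) (u : H) (n : ℕ) :
    H →ₗ[R] Tpow R H n :=
  (mapPow (eAug εc u) n) ∘ₗ (iterComul Δc εc n)

/-- The `n`-th term `P_n(H) := ker (δ^{n+1})` of the coradical filtration. -/
def corad (Δc : H →ₗ[R] H ⊗[R] H) (εc : H →ₗ[R] R) (u : H) (n : ℕ) : Submodule R H :=
  LinearMap.ker (deltaPow Δc εc u (n + 1))

open CategoryTheory MonoidalCategory CartesianMonoidalCategory in
/-- The iterated product `X^{×n}` in a category with (chosen) finite products: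
`X^{×0} = ∗` (the unit/terminal object) and `X^{×(n+1)} = X × X^{×n}`. -/
def opow {C : Type u} [CategoryTheory.SmallCategory C] [CategoryTheory.CartesianMonoidalCategory C]
    (X : C) : ℕ → C
  | 0 => 𝟙_ C
  | n + 1 => X ⊗ opow X n

open CategoryTheory MonoidalCategory CartesianMonoidalCategory in
/-- The diagonal `Δ_X : X → X × X`. -/
def cdiag {C : Type u} [SmallCategory C] [CartesianMonoidalCategory C] (X : C) : X ⟶ X ⊗ X :=
  lift (𝟙 X) (𝟙 X)

open CategoryTheory MonoidalCategory CartesianMonoidalCategory in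
/-- The `n`-fold iterated diagonal `Δ^{(n)}_X : X → X^{×n}`. -/
def iterDiag {C : Type u} [SmallCategory C] [CartesianMonoidalCategory C] (X : C) :
    (n : ℕ) → (X ⟶ opow X n)
  | 0 => toUnit X
  | 1 => (ρ_ X).inv
  | n + 2 => iterDiag X (n + 1) ≫ (cdiag X ▷ opow X n) ≫ (α_ X X (opow X n)).hom

open CategoryTheory MonoidalCategory CartesianMonoidalCategory in
/-- `τ_m = id^{×(m-1)} × p_X × id^{×(n-m)} : X^{×n} → X^{×n}`, where
`p_X = η_X ∘ ε_X : X → X` (using that the terminal object is initial). -/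
def tauAt {C : Type u} [SmallCategory C] [CartesianMonoidalCategory C]
    (hnull : CategoryTheory.Limits.IsInitial (𝟙_ C)) (X : C) :
    (n : ℕ) → ℕ → (opow X n ⟶ opow X n)
  | 0, _ => 𝟙 _
  | n + 1, 0 => (toUnit X ≫ hnull.to X) ▷ opow X n
  | n + 1, m + 1 => X ◁ tauAt hnull X n m

namespace LinearMap

variable {R M N : Type*} [CommRing R] [AddCommGroup M] [Module R M] [AddCommGroup N] [Module R N]

theorem ofFn_foldr_comp_comp_eq {n : ℕ} (Φ : M →ₗ[R] N) (f : Fin n → N →ₗ[R] N)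
    (g : Fin n → M →ₗ[R] M) (h : ∀ i, f i ∘ₗ Φ = Φ ∘ₗ g i) :
    (List.ofFn f).foldr (· ∘ₗ ·) id ∘ₗ Φ = Φ ∘ₗ (List.ofFn g).foldr (· ∘ₗ ·) id := by
  induction n with
  | zero => rfl
  | succ n ih =>
    simp only [List.ofFn_succ, List.foldr_cons]
    rw [comp_assoc, ih _ _ fun i => h i.succ, ← comp_assoc, h 0, comp_assoc]

theorem lTensor_ofFn_foldr_comp {n : ℕ} (f : Fin n → N →ₗ[R] N) :
    lTensor M ((List.ofFn f).foldr (· ∘ₗ ·) id)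
      = (List.ofFn fun i => lTensor M (f i)).foldr (· ∘ₗ ·) id := by
  induction n with
  | zero => exact lTensor_id M N
  | succ n ih =>
    simp only [List.ofFn_succ, List.foldr_cons]
    rw [lTensor_comp, ih]

theorem comp_comp_lTensor_eq_comp_lTensor_comp_map {P Q : Type*} [AddCommGroup P] [Module R P]
    [AddCommGroup Q] [Module R Q] {μ : M ⊗[R] N →ₗ[R] Q}
    {φ : P →ₗ[R] N} {c' : Q →ₗ[R] Q} {c : N →ₗ[R] N} {e : M →ₗ[R] M} {m : P →ₗ[R] P}
    (hμ : c' ∘ₗ μ = μ ∘ₗ TensorProduct.map e c) (hφ : c ∘ₗ φ = φ ∘ₗ m) :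
    c' ∘ₗ μ ∘ₗ lTensor M φ = (μ ∘ₗ lTensor M φ) ∘ₗ TensorProduct.map e m := by
  rw [← comp_assoc, hμ, comp_assoc, map_comp_lTensor, hφ, ← lTensor_comp_map, comp_assoc]

end LinearMap

section ExponentialFunctor

open CategoryTheory MonoidalCategory CartesianMonoidalCategory Functor.LaxMonoidal
  Functor.OplaxMonoidal

variable {k : Type u} [CommRing k] {C : Type u} [SmallCategory C] [CartesianMonoidalCategory C]
  (hnull : Limits.IsInitial (𝟙_ C)) (F : C ⥤ ModuleCat.{u} k) [F.Monoidal] (X : C)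

def tpowIso : (n : ℕ) → (Tpow k (F.obj X) n ≅ F.obj (opow X n))
  | 0 => Functor.Monoidal.εIso F
  | n + 1 => whiskerLeftIso (F.obj X) (tpowIso n) ≪≫ Functor.Monoidal.μIso F X (opow X n)

-- The structure maps of the coaugmented coalgebra `F̃(X)`.
def comulF : F.obj X →ₗ[k] F.obj X ⊗[k] F.obj X :=
  (δ F X X).hom ∘ₗ (F.map (cdiag X)).hom

def counitF : F.obj X →ₗ[k] k :=
  (η F).hom ∘ₗ (F.map (toUnit X)).hom

def coaugF : F.obj X :=
  (F.map (hnull.to X)).hom ((ε F).hom (1 : k))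

def chi (n : ℕ) : F.obj (opow X n) →ₗ[k] F.obj (opow X n) :=
  (List.ofFn fun m : Fin n =>
    LinearMap.id - (F.map (tauAt hnull X n m)).hom).foldr (· ∘ₗ ·) LinearMap.id

variable {F X}

theorem μ_comp_map_whiskerRight_comp_map_associator {Y Z : C} (f : X ⟶ Y ⊗ Z) (W : C) :
    μ F X W ≫ F.map (f ▷ W) ≫ F.map (α_ Y Z W).hom
      = (F.map f ≫ δ F Y Z) ▷ F.obj W ≫ (α_ _ _ _).hom ≫ F.obj Y ◁ μ F Z W
          ≫ μ F Y (Z ⊗ W) := by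
  rw [← μ_natural_left_assoc, ← Functor.LaxMonoidal.associativity, comp_whiskerRight_assoc,
    ← comp_whiskerRight_assoc (δ F Y Z), Functor.Monoidal.δ_μ, id_whiskerRight, Category.id_comp]

theorem whiskerLeft_comp_μ_comp_map_whiskerRight_associator {Y Z W : C} {T : ModuleCat k}
    (f : X ⟶ Y ⊗ Z) (φ : T ⟶ F.obj W) :
    (F.obj X ◁ φ ≫ μ F X W) ≫ F.map (f ▷ W) ≫ F.map (α_ Y Z W).hom
      = (F.map f ≫ δ F Y Z) ▷ T ≫ (α_ _ _ _).hom ≫ F.obj Y ◁ (F.obj Z ◁ φ ≫ μ F Z W)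
          ≫ μ F Y (Z ⊗ W) := by
  rw [Category.assoc, μ_comp_map_whiskerRight_comp_map_associator, whisker_exchange_assoc,
    associator_naturality_right_assoc, whiskerLeft_comp_assoc]

theorem id_sub_map_whiskerLeft_comp_μ {Y : C} (g : Y ⟶ Y) :
    (LinearMap.id - (F.map (X ◁ g)).hom) ∘ₗ (μ F X Y).hom
      = (μ F X Y).hom ∘ₗ LinearMap.lTensor (F.obj X) (LinearMap.id - (F.map g).hom) := by
  have h : (F.map (X ◁ g)).hom ∘ₗ (μ F X Y).hom
      = (μ F X Y).hom ∘ₗ LinearMap.lTensor (F.obj X) (F.map g).hom :=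
    congrArg ModuleCat.Hom.hom (μ_natural_right F X g).symm
  rw [LinearMap.sub_comp, h, LinearMap.lTensor_sub, LinearMap.lTensor_id, LinearMap.comp_sub]
  rfl

theorem id_sub_map_whiskerRight_comp_μ {Y : C} (f : X ⟶ X) :
    (LinearMap.id - (F.map (f ▷ Y)).hom) ∘ₗ (μ F X Y).hom
      = (μ F X Y).hom ∘ₗ LinearMap.rTensor (F.obj Y) (LinearMap.id - (F.map f).hom) := by
  have h : (F.map (f ▷ Y)).hom ∘ₗ (μ F X Y).hom
      = (μ F X Y).hom ∘ₗ LinearMap.rTensor (F.obj Y) (F.map f).hom :=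
    congrArg ModuleCat.Hom.hom (μ_natural_left F f Y).symm
  rw [LinearMap.sub_comp, h, LinearMap.rTensor_sub, LinearMap.rTensor_id, LinearMap.comp_sub]
  rfl

theorem comp_comul_whiskerRight_comp_whiskerLeft_μ {W : C} {T : ModuleCat k} {φ : T ⟶ F.obj W}
    {c : F.obj X ⟶ F.obj X ⊗ T} {d : X ⟶ X ⊗ W} (f : X ⟶ X ⊗ X)
    (h : c ≫ F.obj X ◁ φ ≫ μ F X W = F.map d) :
    c ≫ (F.map f ≫ δ F X X) ▷ T ≫ (α_ _ _ _).hom ≫ F.obj X ◁ (F.obj X ◁ φ ≫ μ F X W)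
        ≫ μ F X (X ⊗ W)
      = F.map (d ≫ f ▷ W ≫ (α_ X X W).hom) := by
  rw [← whiskerLeft_comp_μ_comp_map_whiskerRight_associator, Category.assoc, reassoc_of% h,
    F.map_comp, F.map_comp]

theorem tpowIso_hom_comp_iterComul :
    ∀ n, ModuleCat.ofHom (iterComul (comulF F X) (counitF F X) n) ≫ (tpowIso F X n).hom
      = F.map (iterDiag X n)
  | 0 => by
    change F.map (toUnit X) ≫ η F ≫ ε F = F.map (toUnit X)
    rw [Functor.Monoidal.η_ε, Category.comp_id]
  | 1 => right_unitality_inv F X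
  | n + 2 => comp_comul_whiskerRight_comp_whiskerLeft_μ
      (c := ModuleCat.ofHom (iterComul (comulF F X) (counitF F X) (n + 1)))
      (φ := (tpowIso F X n).hom) (cdiag X) (tpowIso_hom_comp_iterComul (n + 1))

theorem ofFn_foldr_id_sub_map_whiskerLeft_comp_μ {Y : C} {n : ℕ} (g : Fin n → (Y ⟶ Y)) :
    (List.ofFn fun i => LinearMap.id - (F.map (X ◁ g i)).hom).foldr (· ∘ₗ ·) LinearMap.id
        ∘ₗ (μ F X Y).hom
      = (μ F X Y).hom ∘ₗ LinearMap.lTensor (F.obj X)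
          ((List.ofFn fun i => LinearMap.id - (F.map (g i)).hom).foldr (· ∘ₗ ·) LinearMap.id) := by
  rw [LinearMap.lTensor_ofFn_foldr_comp]
  exact LinearMap.ofFn_foldr_comp_comp_eq _ _ _ fun i => id_sub_map_whiskerLeft_comp_μ _

theorem foldr_cons_id_sub_map_whiskerRight_comp_μ {Y : C} {n : ℕ} (f : X ⟶ X)
    (g : Fin n → (Y ⟶ Y)) :
    ((LinearMap.id - (F.map (f ▷ Y)).hom) ::
        List.ofFn fun i => LinearMap.id - (F.map (X ◁ g i)).hom).foldr (· ∘ₗ ·) LinearMap.id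
        ∘ₗ (μ F X Y).hom
      = (μ F X Y).hom ∘ₗ TensorProduct.map (LinearMap.id - (F.map f).hom)
          ((List.ofFn fun i => LinearMap.id - (F.map (g i)).hom).foldr (· ∘ₗ ·) LinearMap.id) := by
  rw [List.foldr_cons, LinearMap.comp_assoc, ofFn_foldr_id_sub_map_whiskerLeft_comp_μ,
    ← LinearMap.comp_assoc, id_sub_map_whiskerRight_comp_μ, LinearMap.comp_assoc,
    LinearMap.rTensor_comp_lTensor]

theorem chi_comp_tpowIso_hom :
    ∀ n, chi hnull F X n ∘ₗ (tpowIso F X n).hom.hom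
      = (tpowIso F X n).hom.hom ∘ₗ
          mapPow (LinearMap.id - (F.map (toUnit X ≫ hnull.to X)).hom) n
  | 0 => rfl
  | n + 1 => LinearMap.comp_comp_lTensor_eq_comp_lTensor_comp_map
      (μ := (μ F X (opow X n)).hom) (φ := (tpowIso F X n).hom.hom)
      (by rw [chi, List.ofFn_succ]; exact foldr_cons_id_sub_map_whiskerRight_comp_μ _ _)
      (chi_comp_tpowIso_hom n)

theorem eAug_counitF_coaugF :
    eAug (counitF F X) (coaugF hnull F X)
      = LinearMap.id - (F.map (toUnit X ≫ hnull.to X)).hom := by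
  have hcoaug : LinearMap.toSpanSingleton k (F.obj X) (coaugF hnull F X)
      = (ε F ≫ F.map (hnull.to X)).hom :=
    LinearMap.ext_ring (one_smul k _)
  have hproj : LinearMap.toSpanSingleton k (F.obj X) (coaugF hnull F X) ∘ₗ counitF F X
      = (F.map (toUnit X) ≫ η F ≫ ε F ≫ F.map (hnull.to X)).hom := by
    rw [hcoaug]
    rfl
  rw [eAug, hproj, Functor.Monoidal.η_ε_assoc, ← F.map_comp]

end ExponentialFunctor

attribute [local instance] CategoryTheory.BraidedCategory.ofCartesianMonoidalCategory

open CategoryTheory MonoidalCategory CartesianMonoidalCategory Functor.LaxMonoidal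
  Functor.OplaxMonoidal in
/-- For a symmetric monoidal (exponential) functor `F : C → Mod_k` on a category with finite
products whose terminal object is a zero object, the `n`-th polynomial approximation of `F`
at `X` (the kernel of `χ ∘ F(Δ^{(n+1)}_X)`) coincides with the `n`-th coradical filtration of
the coaugmented coalgebra `F̃(X)` (whose comultiplication is `μ⁻¹ ∘ F(Δ_X)`, counit
`F(∗) ≅ k` composed with `F(ε_X)`, and coaugmentation induced by `F(η_X)`). -/
theorem stmt19 {k : Type u} [CommRing k] {C : Type u} [SmallCategory C]
    [CartesianMonoidalCategory C] (hnull : CategoryTheory.Limits.IsInitial (𝟙_ C))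
    (F : C ⥤ ModuleCat.{u} k) [F.Braided] (X : C) (n : ℕ) :
    LinearMap.ker
        ((((List.ofFn fun m : Fin (n + 1) =>
              (LinearMap.id - (F.map (tauAt hnull X (n + 1) m)).hom :
                F.obj (opow X (n + 1)) →ₗ[k] F.obj (opow X (n + 1)))).foldr
            (· ∘ₗ ·) LinearMap.id)
          ∘ₗ ((F.map (iterDiag X (n + 1))).hom : F.obj X →ₗ[k] F.obj (opow X (n + 1)))))
      = corad
          (((δ F X X).hom ∘ₗ (F.map (cdiag X)).hom : F.obj X →ₗ[k] F.obj X ⊗[k] F.obj X))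
          (((η F).hom ∘ₗ (F.map (toUnit X)).hom : F.obj X →ₗ[k] k))
          ((F.map (hnull.to X)).hom ((ε F).hom (1 : k)))
          n := by
  change LinearMap.ker (chi hnull F X (n + 1) ∘ₗ (F.map (iterDiag X (n + 1))).hom)
    = LinearMap.ker (deltaPow (comulF F X) (counitF F X) (coaugF hnull F X) (n + 1))
  rw [← tpowIso_hom_comp_iterComul, ModuleCat.hom_comp, ModuleCat.hom_ofHom,
    ← LinearMap.comp_assoc, chi_comp_tpowIso_hom, deltaPow, eAug_counitF_coaugF,
    LinearMap.comp_assoc]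
  exact LinearEquiv.ker_comp (tpowIso F X (n + 1)).toLinearEquiv _
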